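/- arXiv:1009.1310 — 5 statements merged into one kernel-verified Lean document; each statement's English description precedes it below -/
import Mathlib

section
/- Let A be a measure space with σ-finite measure μ, let p ≥ 1, and let f ∈ L²(A^p, μ^⊗p) be symmetric. For σ ∈ S_{2p} with #(σ({1,…,p}) ∩ {1,…,p}) = r, the integral ∫_{A^{2p}} f(t_1,…,t_p) f(t_{σ(1)},…,t_{σ(p)}) f(t_{p+1},…,t_{2p}) f(t_{σ(p+1)},…,t_{σ(2p)}) dμ^{⊗2p} equals ‖f ⊗_r f‖²_{L²(A^{2p−2r})}, the squared L² norm of the contraction of order r of f with itself. -/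
/-!
Write `I = {1, …, p}` and `J = σ(I)`. The four factors of the integrand are `f` evaluated on the
coordinates indexed by `I`, `J`, `Iᶜ` and `Jᶜ`, and since `f` is symmetric only these sets
matter. The cells `I ∩ J` and `Iᶜ ∩ Jᶜ` have `r` elements, `I \ J` and `J \ I` have `p - r`.
Relabel the coordinates so that `I \ J`, `J \ I` become the two halves of the variable `x` of the
contraction and `I ∩ J`, `Iᶜ ∩ Jᶜ` two copies `s`, `s'` of its integration variable: the integrand
becomes `F(x, s) F(x, s')` with `F(x, s) = f(x₁, s) f(x₂, s)`, and Fubini gives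
`∫ (∫ F(x, s) ds)² dx`. Integrability holds because the integrand is the product of the two `L²`
functions `f(t_I) f(t_Iᶜ)` and `f(t_J) f(t_Jᶜ)`.
-/

open MeasureTheory Finset

/-- Padding: view a finite tuple as defined on all of `ℕ`, with junk value elsewhere. -/
def padA {A : Type*} [Inhabited A] {k : ℕ} (x : Fin k → A) (n : ℕ) : A :=
  if h : n < k then x ⟨n, h⟩ else default

theorem comp_eq_of_range_subset {A ι : Type*} {p : ℕ} {f : (Fin p → A) → ℝ}
    (hsym : ∀ (π : Equiv.Perm (Fin p)) (x : Fin p → A), f (x ∘ π) = f x)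
    {e e' : Fin p → ι} (he : e.Injective) (he' : e'.Injective)
    (h : Set.range e ⊆ Set.range e') (t : ι → A) :
    f (t ∘ e) = f (t ∘ e') := by
  have hrange : Set.range e = Set.range e' :=
    Set.eq_of_subset_of_ncard_le h (by rw [Set.ncard_range_of_injective he,
      Set.ncard_range_of_injective he']) (Set.finite_range e')
  let ρ : Equiv.Perm (Fin p) :=
    (Equiv.ofInjective e he).trans ((Equiv.setCongr hrange).trans (Equiv.ofInjective e' he').symm)
  have hρ : e' ∘ ρ = e := funext fun i => Equiv.apply_ofInjective_symm he' _
  rw [← hρ, ← Function.comp_assoc, hsym]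

theorem integral_mul_self_prod_eq_integral_sq {X Y : Type*} [MeasurableSpace X]
    [MeasurableSpace Y] {μ : Measure X} {ν : Measure Y} [SigmaFinite μ] [SigmaFinite ν]
    {g : X → Y → ℝ}
    (hg : Integrable (fun z : X × Y × Y => g z.1 z.2.1 * g z.1 z.2.2) (μ.prod (ν.prod ν))) :
    ∫ z, g z.1 z.2.1 * g z.1 z.2.2 ∂(μ.prod (ν.prod ν)) = ∫ x, (∫ y, g x y ∂ν) ^ 2 ∂μ := by
  rw [integral_prod _ hg]
  refine integral_congr_ae (ae_of_all _ fun x => ?_)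
  simp only [sq, ← integral_prod_mul (μ := ν) (ν := ν)]

section PiMeasure

variable {A : Type*} [MeasurableSpace A] {α β γ ι : Type*}

theorem memLp_two_mul_comp_sumEquiv [Fintype α] [Fintype β] [Fintype ι] {μ : Measure A}
    [SigmaFinite μ] {f : (α → A) → ℝ} {g : (β → A) → ℝ}
    (hf : MemLp f 2 (Measure.pi fun _ => μ)) (hg : MemLp g 2 (Measure.pi fun _ => μ))
    (E : α ⊕ β ≃ ι) :
    MemLp (fun t : ι → A => f (t ∘ E ∘ Sum.inl) * g (t ∘ E ∘ Sum.inr)) 2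
      (Measure.pi fun _ => μ) := by
  have hprod : MemLp (fun y : (α → A) × (β → A) => f y.1 * g y.2) 2
      ((Measure.pi fun _ => μ).prod (Measure.pi fun _ => μ)) := by
    refine (memLp_two_iff_integrable_sq (hf.1.comp_fst.mul hg.1.comp_snd)).2 ?_
    simpa only [Pi.mul_apply, mul_pow] using hf.integrable_sq.mul_prod hg.integrable_sq
  exact hprod.comp_measurePreserving ((measurePreserving_sumPiEquivProdPi fun _ => μ).comp
    ((measurePreserving_piCongrLeft (fun _ => μ) E).symm _))

def MeasurableEquiv.piSumSum (k : α ⊕ (β ⊕ γ) ≃ ι) :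
    (ι → A) ≃ᵐ (α → A) × (β → A) × (γ → A) :=
  (MeasurableEquiv.piCongrLeft (fun _ => A) k).symm.trans
    ((MeasurableEquiv.sumPiEquivProdPi fun _ => A).trans
      ((MeasurableEquiv.refl _).prodCongr (MeasurableEquiv.sumPiEquivProdPi fun _ => A)))

theorem MeasurableEquiv.piSumSum_apply (k : α ⊕ (β ⊕ γ) ≃ ι) (t : ι → A) :
    MeasurableEquiv.piSumSum k t =
      (t ∘ k ∘ Sum.inl, t ∘ k ∘ Sum.inr ∘ Sum.inl, t ∘ k ∘ Sum.inr ∘ Sum.inr) := rfl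

theorem MeasurableEquiv.measurePreserving_piSumSum [Fintype α] [Fintype β] [Fintype γ]
    [Fintype ι] (μ : Measure A) [SigmaFinite μ] (k : α ⊕ (β ⊕ γ) ≃ ι) :
    MeasurePreserving (MeasurableEquiv.piSumSum k) (Measure.pi fun _ => μ)
      ((Measure.pi fun _ => μ).prod ((Measure.pi fun _ => μ).prod (Measure.pi fun _ => μ))) :=
  ((MeasurePreserving.id _).prod (measurePreserving_sumPiEquivProdPi fun _ => μ)).comp
    ((measurePreserving_sumPiEquivProdPi fun _ => μ).comp
      ((measurePreserving_piCongrLeft (fun _ => μ) k).symm _))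

end PiMeasure

def memPattern {ι : Type*} [DecidableEq ι] (I J : Finset ι) (x : ι) : Bool × Bool :=
  (decide (x ∈ I), decide (x ∈ J))

/-- The coordinates `(x, s, s')` of the contraction side, labelled by the cell of `(I, J)` they
are sent to: the first half of `x` to `I \ J`, its second half to `J \ I`, `s` to `I ∩ J` and
`s'` to `Iᶜ ∩ Jᶜ`. -/
def blockPattern (p r : ℕ) : Fin (2 * p - 2 * r) ⊕ (Fin r ⊕ Fin r) → Bool × Bool
  | .inl j => (decide (j.val < p - r), !decide (j.val < p - r))
  | .inr (.inl _) => (true, true)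
  | .inr (.inr _) => (false, false)

theorem card_memPattern_fiber {ι : Type*} [Fintype ι] [DecidableEq ι] {I J : Finset ι}
    {p r : ℕ} (hI : #I = p) (hJ : #J = p) (hIJ : #(I ∩ J) = r) (hι : Fintype.card ι = 2 * p)
    (v : Bool × Bool) :
    Fintype.card {x // memPattern I J x = v} = if v.1 = v.2 then r else p - r := by
  rcases v with ⟨_ | _, _ | _⟩ <;>
    simp only [memPattern, Prod.mk.injEq, decide_eq_true_eq, decide_eq_false_iff_not,
      ← mem_inter, ← mem_compl, Fintype.card_coe, if_true, if_false, Bool.true_eq_false,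
      Bool.false_eq_true]
  · have := card_union_add_card_inter I J
    rw [← compl_union, card_compl]
    omega
  · rw [inter_comm, ← sdiff_eq_inter_compl, card_sdiff, hIJ, hJ]
  · rw [← sdiff_eq_inter_compl, card_sdiff, inter_comm, hIJ, hI]
  · exact hIJ

theorem card_blockPattern_fiber (p r : ℕ) (v : Bool × Bool) :
    Fintype.card {z // blockPattern p r z = v} = if v.1 = v.2 then r else p - r := by
  have hlt : #{j : Fin (2 * p - 2 * r) | j.val < p - r} = p - r := by
    rw [Fin.card_filter_val_lt]; omega
  have hge : #{j : Fin (2 * p - 2 * r) | ¬ j.val < p - r} = p - r := by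
    rw [filter_not, card_sdiff_of_subset (filter_subset _ _), hlt, card_univ, Fintype.card_fin]
    omega
  rw [Fintype.card_subtype, card_filter, Fintype.sum_sum_type, Fintype.sum_sum_type]
  rcases v with ⟨_ | _, _ | _⟩ <;>
    simp only [blockPattern, Prod.mk.injEq, Bool.not_eq_eq_eq_not, Bool.not_true,
      Bool.not_false, Bool.false_eq_true, Bool.true_eq_false, decide_eq_true_iff,
      decide_eq_false_iff_not, and_self, and_false, and_true, not_and_self_iff, and_not_self_iff,
      ite_false, ite_true, ← card_filter, sum_const_zero, sum_const, card_univ, Fintype.card_fin,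
      smul_eq_mul, mul_one, zero_add, add_zero, hlt, hge]

theorem exists_equiv_blockPattern {ι : Type*} [Fintype ι] [DecidableEq ι] {I J : Finset ι}
    {p r : ℕ} (hI : #I = p) (hJ : #J = p) (hIJ : #(I ∩ J) = r) (hι : Fintype.card ι = 2 * p) :
    ∃ k : Fin (2 * p - 2 * r) ⊕ (Fin r ⊕ Fin r) ≃ ι,
      ∀ z, memPattern I J (k z) = blockPattern p r z :=
  ⟨Equiv.ofFiberEquiv fun v => Fintype.equivOfCardEq <| by
      rw [card_blockPattern_fiber, card_memPattern_fiber hI hJ hIJ hι],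
    Equiv.ofFiberEquiv_map _⟩

/-- The positions, among the coordinates `(x, s, s')`, of the `p` arguments of `f` in a factor of
the contraction: `p - r` entries of `x` starting at `o`, then all of `s` (`side = Sum.inl`) or
of `s'` (`side = Sum.inr`). -/
def blockIndex (p r o : ℕ) (ho : o + (p - r) ≤ 2 * p - 2 * r) (side : Fin r → Fin r ⊕ Fin r)
    (i : Fin p) : Fin (2 * p - 2 * r) ⊕ (Fin r ⊕ Fin r) :=
  if h : i.val < p - r then .inl ⟨o + i.val, by omega⟩
  else .inr (side ⟨i.val - (p - r), by omega⟩)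

theorem blockIndex_injective {p r o : ℕ} {ho : o + (p - r) ≤ 2 * p - 2 * r}
    {side : Fin r → Fin r ⊕ Fin r} (hside : side.Injective) :
    (blockIndex p r o ho side).Injective := by
  intro i j hij
  unfold blockIndex at hij
  split_ifs at hij
  · simp only [Sum.inl.injEq, Fin.mk.injEq, Nat.add_left_cancel_iff] at hij
    exact Fin.ext hij
  · simp only [Sum.inr.injEq] at hij
    have := congrArg Fin.val (hside hij)
    simp only at this
    omega

theorem padA_comp_blockIndex {A : Type*} [Inhabited A] {p r o : ℕ}
    {ho : o + (p - r) ≤ 2 * p - 2 * r} {side : Fin r → Fin r ⊕ Fin r}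
    (y : Fin (2 * p - 2 * r) ⊕ (Fin r ⊕ Fin r) → A) :
    (fun i : Fin p => if i.val < p - r then padA (y ∘ Sum.inl) (o + i.val)
      else padA (y ∘ Sum.inr ∘ side) (i.val - (p - r))) = y ∘ blockIndex p r o ho side := by
  funext i
  simp only [Function.comp_apply, blockIndex]
  split_ifs
  · rw [padA, dif_pos (by omega)]; rfl
  · rw [padA, dif_pos (by omega)]; rfl

def finHalvesEquiv (p : ℕ) : Fin p ⊕ Fin p ≃ Fin (2 * p) :=
  finSumFinEquiv.trans (finCongr (two_mul p).symm)

def lowerHalf (p : ℕ) : Finset (Fin (2 * p)) := univ.filter fun i => (i : ℕ) < p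

theorem card_lowerHalf (p : ℕ) : #(lowerHalf p) = p := by
  rw [lowerHalf, Fin.card_filter_val_lt, min_eq_right (by omega)]

theorem range_finHalvesEquiv_inl (p : ℕ) :
    Set.range (finHalvesEquiv p ∘ Sum.inl) = ↑(lowerHalf p) := by
  ext x
  simp only [Set.mem_range, lowerHalf, coe_filter, mem_univ, true_and, Set.mem_ofPred_eq]
  exact ⟨fun ⟨i, hi⟩ => hi ▸ i.isLt, fun hx => ⟨⟨x, hx⟩, rfl⟩⟩

theorem range_finHalvesEquiv_inr (p : ℕ) :
    Set.range (finHalvesEquiv p ∘ Sum.inr) = ↑(lowerHalf p)ᶜ := by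
  ext x
  simp only [Set.mem_range, lowerHalf, coe_compl, coe_filter, mem_univ, true_and,
    Set.mem_compl_iff, Set.mem_ofPred_eq, not_lt]
  refine ⟨fun ⟨i, hi⟩ => hi ▸ ?_, fun hx => ⟨⟨x - p, by omega⟩, Fin.ext ?_⟩⟩
  · show p ≤ p + (i : ℕ); omega
  · show p + ((x : ℕ) - p) = x; omega

def fourfoldIntegrand {A : Type*} {p : ℕ} (f : (Fin p → A) → ℝ) (σ : Equiv.Perm (Fin (2 * p)))
    (t : Fin (2 * p) → A) : ℝ :=
  f (t ∘ finHalvesEquiv p ∘ Sum.inl) * f (t ∘ σ ∘ finHalvesEquiv p ∘ Sum.inl)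
    * f (t ∘ finHalvesEquiv p ∘ Sum.inr) * f (t ∘ σ ∘ finHalvesEquiv p ∘ Sum.inr)

theorem integrable_fourfoldIntegrand {A : Type*} [MeasurableSpace A] {μ : Measure A}
    [SigmaFinite μ] {p : ℕ} {f : (Fin p → A) → ℝ} (hf : MemLp f 2 (Measure.pi fun _ => μ))
    (σ : Equiv.Perm (Fin (2 * p))) :
    Integrable (fourfoldIntegrand f σ) (Measure.pi fun _ => μ) := by
  refine ((memLp_two_mul_comp_sumEquiv hf hf (finHalvesEquiv p)).integrable_mul
    (memLp_two_mul_comp_sumEquiv hf hf ((finHalvesEquiv p).trans σ))).congr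
    (ae_of_all _ fun t => ?_)
  simp only [fourfoldIntegrand, Pi.mul_apply, Equiv.coe_trans, Function.comp_assoc]
  ring

section Contraction

variable {A : Type*} [Inhabited A] {p r : ℕ}

/-- `∫ s, contractionIntegrand f x s` is the contraction `(f ⊗_r f) x`, the two halves of `x`
being read off with `padA`. -/
def contractionIntegrand (f : (Fin p → A) → ℝ) (x : Fin (2 * p - 2 * r) → A) (s : Fin r → A) :
    ℝ :=
  f (fun i : Fin p => if i.val < p - r then padA x i.val else padA s (i.val - (p - r)))
    * f (fun i : Fin p =>
        if i.val < p - r then padA x ((p - r) + i.val) else padA s (i.val - (p - r)))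

theorem comp_eq_padA_of_range_subset {ι : Type*} {f : (Fin p → A) → ℝ}
    (hsym : ∀ (π : Equiv.Perm (Fin p)) (x : Fin p → A), f (x ∘ π) = f x)
    {e : Fin p → ι} (he : e.Injective) (k : Fin (2 * p - 2 * r) ⊕ (Fin r ⊕ Fin r) ≃ ι)
    {o : ℕ} {ho : o + (p - r) ≤ 2 * p - 2 * r} {side : Fin r → Fin r ⊕ Fin r}
    (hside : side.Injective) (h : ∀ i, k (blockIndex p r o ho side i) ∈ Set.range e)
    (t : ι → A) :
    f (t ∘ e) = f (fun i => if i.val < p - r then padA (t ∘ k ∘ Sum.inl) (o + i.val)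
      else padA (t ∘ k ∘ Sum.inr ∘ side) (i.val - (p - r))) :=
  (comp_eq_of_range_subset hsym (k.injective.comp (blockIndex_injective hside)) he
    (Set.range_subset_iff.2 h) t).symm.trans (congrArg f (padA_comp_blockIndex (t ∘ k)).symm)

theorem fourfoldIntegrand_eq_contractionIntegrand_mul {f : (Fin p → A) → ℝ}
    (hsym : ∀ (π : Equiv.Perm (Fin p)) (x : Fin p → A), f (x ∘ π) = f x)
    (σ : Equiv.Perm (Fin (2 * p))) (k : Fin (2 * p - 2 * r) ⊕ (Fin r ⊕ Fin r) ≃ Fin (2 * p))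
    (hk : ∀ z, memPattern (lowerHalf p) ((lowerHalf p).image σ) (k z) = blockPattern p r z)
    (t : Fin (2 * p) → A) :
    fourfoldIntegrand f σ t
      = contractionIntegrand f (t ∘ k ∘ Sum.inl) (t ∘ k ∘ Sum.inr ∘ Sum.inl)
        * contractionIntegrand f (t ∘ k ∘ Sum.inl) (t ∘ k ∘ Sum.inr ∘ Sum.inr) := by
  have hI : ∀ z, k z ∈ lowerHalf p ↔ (blockPattern p r z).1 = true := fun z => by
    rw [← hk z, memPattern, decide_eq_true_iff]
  have hJ : ∀ z, σ.symm (k z) ∈ lowerHalf p ↔ (blockPattern p r z).2 = true := fun z => by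
    rw [← hk z, memPattern, decide_eq_true_iff]
    simp [← Equiv.eq_symm_apply]
  have hσ : ∀ (g : Fin p → Fin (2 * p)) x, x ∈ Set.range (σ ∘ g) ↔ σ.symm x ∈ Set.range g :=
    fun g x => by simp [← Equiv.eq_symm_apply]
  have hlow : ∀ x, x ∈ Set.range (finHalvesEquiv p ∘ Sum.inl) ↔ x ∈ lowerHalf p := fun x => by
    rw [range_finHalvesEquiv_inl, mem_coe]
  have hhigh : ∀ x, x ∈ Set.range (finHalvesEquiv p ∘ Sum.inr) ↔ x ∉ lowerHalf p := fun x => by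
    rw [range_finHalvesEquiv_inr, coe_compl, Set.mem_compl_iff, mem_coe]
  have hE := (finHalvesEquiv p).injective
  have hfI := comp_eq_padA_of_range_subset (o := 0) (ho := by omega) hsym
    (hE.comp Sum.inl_injective) k Sum.inl_injective (fun i => by
      rw [hlow, hI]; unfold blockIndex; split_ifs with h <;> simp [blockPattern, h]) t
  have hfJ := comp_eq_padA_of_range_subset (o := p - r) (ho := by omega) hsym
    (σ.injective.comp (hE.comp Sum.inl_injective)) k Sum.inl_injective (fun i => by
      rw [hσ, hlow, hJ]; unfold blockIndex; split_ifs <;> simp [blockPattern]) t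
  have hfIc := comp_eq_padA_of_range_subset (o := p - r) (ho := by omega) hsym
    (hE.comp Sum.inr_injective) k Sum.inr_injective (fun i => by
      rw [hhigh, hI]; unfold blockIndex; split_ifs <;> simp [blockPattern]) t
  have hfJc := comp_eq_padA_of_range_subset (o := 0) (ho := by omega) hsym
    (σ.injective.comp (hE.comp Sum.inr_injective)) k Sum.inr_injective (fun i => by
      rw [hσ, hhigh, hJ]; unfold blockIndex; split_ifs with h <;> simp [blockPattern, h]) t
  simp only [zero_add] at hfI hfJc
  rw [fourfoldIntegrand, contractionIntegrand, contractionIntegrand, hfI, hfJ, hfIc, hfJc]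
  ring

end Contraction

theorem stmt_3 {A : Type*} [MeasurableSpace A] [Inhabited A] (μ : Measure A) [SigmaFinite μ]
    (p r : ℕ)
    (f : (Fin p → A) → ℝ)
    (hsym : ∀ (π : Equiv.Perm (Fin p)) (x : Fin p → A), f (x ∘ π) = f x)
    (hf : MemLp f 2 (Measure.pi fun _ : Fin p => μ))
    (σ : Equiv.Perm (Fin (2*p)))
    (hcard : ((((Finset.univ.filter (fun i : Fin (2*p) => (i : ℕ) < p)).image σ)
        ∩ (Finset.univ.filter (fun i : Fin (2*p) => (i : ℕ) < p))).card = r)) :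
    (∫ t : Fin (2*p) → A,
        f (fun i : Fin p => t ⟨i.val, by have := i.isLt; omega⟩)
        * f (fun i : Fin p => t (σ ⟨i.val, by have := i.isLt; omega⟩))
        * f (fun i : Fin p => t ⟨p + i.val, by have := i.isLt; omega⟩)
        * f (fun i : Fin p => t (σ ⟨p + i.val, by have := i.isLt; omega⟩))
      ∂(Measure.pi fun _ : Fin (2*p) => μ))
    = ∫ x : Fin (2*p - 2*r) → A,
        (∫ s : Fin r → A,
          f (fun i : Fin p => if i.val < p - r then padA x i.val else padA s (i.val - (p - r)))
          * f (fun i : Fin p =>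
              if i.val < p - r then padA x ((p - r) + i.val) else padA s (i.val - (p - r)))
        ∂(Measure.pi fun _ : Fin r => μ)) ^ 2
      ∂(Measure.pi fun _ : Fin (2*p - 2*r) => μ) := by
  obtain ⟨k, hk⟩ := exists_equiv_blockPattern (r := r) (card_lowerHalf p)
    (by rw [card_image_of_injective _ σ.injective, card_lowerHalf])
    (by rw [inter_comm]; exact hcard) (Fintype.card_fin _)
  have hT := MeasurableEquiv.measurePreserving_piSumSum μ k
  let G : (Fin (2 * p - 2 * r) → A) × (Fin r → A) × (Fin r → A) → ℝ := fun z =>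
    contractionIntegrand f z.1 z.2.1 * contractionIntegrand f z.1 z.2.2
  have hfourfold : ∀ t, fourfoldIntegrand f σ t = G (MeasurableEquiv.piSumSum k t) :=
    fun t => by
      rw [MeasurableEquiv.piSumSum_apply]
      exact fourfoldIntegrand_eq_contractionIntegrand_mul hsym σ k hk t
  have hG : Integrable G _ := (hT.integrable_comp_emb (MeasurableEquiv.measurableEmbedding _)).1
    ((integrable_fourfoldIntegrand hf σ).congr (ae_of_all _ hfourfold))
  calc _ = ∫ t, G (MeasurableEquiv.piSumSum k t) ∂(Measure.pi fun _ => μ) :=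
        integral_congr_ae (ae_of_all _ hfourfold)
    _ = ∫ z, G z ∂((Measure.pi fun _ => μ).prod
          ((Measure.pi fun _ => μ).prod (Measure.pi fun _ => μ))) := hT.integral_comp' G
    _ = _ := integral_mul_self_prod_eq_integral_sq hG
end

section
/- Let H be a real separable Hilbert space, f ∈ H^⊙p, g ∈ H^⊙q symmetric tensors with 1 ≤ r < min(p, q). Then ‖f ⊗_r g‖²_{H^⊗(p+q−2r)} = ⟨f ⊗_{p−r} f, g ⊗_{q−r} g⟩_{H^⊗2r}, and consequently ‖f ⊗_r g‖² ≤ (1/2)(‖f ⊗_{p−r} f‖²_{H^⊗2r} + ‖g ⊗_{q−r} g‖²_{H^⊗2r}). -/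
open Finset

/-- Padding: view a finite tuple of basis indices as defined on all of `ℕ`. -/
def pad {k : ℕ} (x : Fin k → ℕ) (n : ℕ) : ℕ := if h : n < k then x ⟨n, h⟩ else 0

/-- The contraction of order `r` of `f ∈ H^{⊗p}` and `g ∈ H^{⊗q}`, where tensors over the
real separable Hilbert space `H` are represented by their (square-summable) coefficients
with respect to a complete orthonormal system indexed by `ℕ`. -/
noncomputable def contr (p q r : ℕ) (f : (Fin p → ℕ) → ℝ) (g : (Fin q → ℕ) → ℝ) :
    (Fin (p + q - 2*r) → ℕ) → ℝ :=
  fun x => ∑' s : Fin r → ℕ,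
    f (fun i => if i.val < p - r then pad x i.val else pad s (i.val - (p - r))) *
    g (fun i => if i.val < q - r then pad x ((p - r) + i.val) else pad s (i.val - (q - r)))

/-- Squared norm `‖f‖²` of a tensor given by its coefficients. -/
noncomputable def nsq {k : ℕ} (f : (Fin k → ℕ) → ℝ) : ℝ := ∑' x : Fin k → ℕ, f x ^ 2

/-- Inner product `⟨f, g⟩` of tensors given by their coefficients. -/
noncomputable def hinner {k : ℕ} (f g : (Fin k → ℕ) → ℝ) : ℝ := ∑' x : Fin k → ℕ, f x * g x

/-- Symmetrization of a tensor. -/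
noncomputable def symz {k : ℕ} (f : (Fin k → ℕ) → ℝ) : (Fin k → ℕ) → ℝ :=
  fun x => (1 / (k.factorial : ℝ)) * ∑ σ : Equiv.Perm (Fin k), f (x ∘ σ)

/-- A tensor is symmetric if it is invariant under permutation of its arguments. -/
def IsSym {k : ℕ} (f : (Fin k → ℕ) → ℝ) : Prop :=
  ∀ (σ : Equiv.Perm (Fin k)) (x : Fin k → ℕ), f (x ∘ σ) = f x

/-- Recasting a tensor along the canonical identification `Fin k ≃ Fin k'` when `k = k'`. -/
def recast {k : ℕ} (k' : ℕ) (f : (Fin k → ℕ) → ℝ) : (Fin k' → ℕ) → ℝ :=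
  fun x => f (fun i => pad x i.val)

/-!
Split the index tuples of `f` and `g` into free and contracted coordinates, so that they become
square-summable kernels `F (u, s)` and `G (v, s)`, with `s` running over the `r` contracted
indices. Then `‖f ⊗_r g‖² = ∑_{u,v} (∑_s F(u,s) G(v,s))²`. Expanding the square and exchanging
the order of summation (absolutely convergent by Cauchy–Schwarz) gives
`∑_{s,t} (∑_u F(u,s) F(u,t)) (∑_v G(v,s) G(v,t))`, and by symmetry of `f` and `g` the two Gram
kernels are `f ⊗_{p-r} f` and `g ⊗_{q-r} g`. The inequality is then `xy ≤ (x² + y²)/2` termwise.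
-/

section SquareSummable

variable {ι : Type*} {u v : ι → ℝ}

theorem summable_norm_mul_of_sq (hu : Summable fun i => u i ^ 2)
    (hv : Summable fun i => v i ^ 2) :
    Summable fun i => ‖u i * v i‖ :=
  (hu.add hv).of_nonneg_of_le (fun _ => norm_nonneg _) fun i => by
    rw [norm_mul, Real.norm_eq_abs, Real.norm_eq_abs]
    nlinarith [two_mul_le_add_sq |u i| |v i|, sq_abs (u i), sq_abs (v i), abs_nonneg (u i),
      abs_nonneg (v i)]

theorem tsum_mul_sq_le (hu : Summable fun i => u i ^ 2) (hv : Summable fun i => v i ^ 2) :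
    (∑' i, u i * v i) ^ 2 ≤ (∑' i, u i ^ 2) * ∑' i, v i ^ 2 :=
  le_of_tendsto_of_tendsto' ((summable_norm_mul_of_sq hu hv).of_norm.hasSum.pow 2)
    (Filter.Tendsto.mul hu.hasSum hv.hasSum) fun s => sum_mul_sq_le_sq_mul_sq s u v

theorem tsum_mul_le_half_add_sq (hu : Summable fun i => u i ^ 2)
    (hv : Summable fun i => v i ^ 2) :
    ∑' i, u i * v i ≤ (1 / 2) * (∑' i, u i ^ 2 + ∑' i, v i ^ 2) := by
  rw [← hu.tsum_add hv, ← tsum_mul_left]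
  exact (summable_norm_mul_of_sq hu hv).of_norm.tsum_le_tsum
    (fun i => by nlinarith [two_mul_le_add_sq (u i) (v i)]) ((hu.add hv).mul_left _)

end SquareSummable

section RowInner

variable {A B S : Type*} {F : A × S → ℝ} {G : B × S → ℝ}

noncomputable def rowInner (F : A × S → ℝ) (G : B × S → ℝ) (z : A × B) : ℝ :=
  ∑' s, F (z.1, s) * G (z.2, s)

noncomputable def gram (F : A × S → ℝ) (w : S × S) : ℝ :=
  ∑' a, F (a, w.1) * F (a, w.2)

lemma summable_row_sq (hF : Summable fun x => F x ^ 2) (a : A) :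
    Summable fun s => F (a, s) ^ 2 :=
  hF.comp_injective (Prod.mk_right_injective a)

lemma summable_col_sq (hF : Summable fun x => F x ^ 2) (s : S) :
    Summable fun a => F (a, s) ^ 2 :=
  hF.comp_injective (Prod.mk_left_injective s)

lemma summable_tsum_row_sq (hF : Summable fun x => F x ^ 2) :
    Summable fun a => ∑' s, F (a, s) ^ 2 :=
  ((summable_prod_of_nonneg fun _ => sq_nonneg _).mp hF).2

lemma summable_tsum_row_sq_mul (hF : Summable fun x => F x ^ 2)
    (hG : Summable fun x => G x ^ 2) :
    Summable fun z : A × B => (∑' s, F (z.1, s) ^ 2) * ∑' s, G (z.2, s) ^ 2 :=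
  (summable_tsum_row_sq hF).mul_of_nonneg (summable_tsum_row_sq hG)
    (fun _ => tsum_nonneg fun _ => sq_nonneg _) (fun _ => tsum_nonneg fun _ => sq_nonneg _)

theorem summable_rowInner_sq (hF : Summable fun x => F x ^ 2)
    (hG : Summable fun x => G x ^ 2) :
    Summable fun z => rowInner F G z ^ 2 :=
  (summable_tsum_row_sq_mul hF hG).of_nonneg_of_le (fun _ => sq_nonneg _) fun z =>
    tsum_mul_sq_le (summable_row_sq hF z.1) (summable_row_sq hG z.2)

lemma summable_rowInner_expansion (hF : Summable fun x => F x ^ 2)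
    (hG : Summable fun x => G x ^ 2) :
    Summable fun x : (A × B) × (S × S) =>
      F (x.1.1, x.2.1) * G (x.1.2, x.2.1) * (F (x.1.1, x.2.2) * G (x.1.2, x.2.2)) := by
  have hrow (z : A × B) : Summable fun s => ‖F (z.1, s) * G (z.2, s)‖ :=
    summable_norm_mul_of_sq (summable_row_sq hF z.1) (summable_row_sq hG z.2)
  refine Summable.of_norm <|
    (summable_prod_of_nonneg fun _ => norm_nonneg _).mpr ⟨fun z => ?_, ?_⟩
  · simpa only [norm_mul] using
      (hrow z).mul_of_nonneg (hrow z) (fun _ => norm_nonneg _) (fun _ => norm_nonneg _)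
  · refine (summable_tsum_row_sq_mul hF hG).of_nonneg_of_le
      (fun _ => tsum_nonneg fun _ => norm_nonneg _) fun z => ?_
    have habs : ∀ s, ‖F (z.1, s) * G (z.2, s)‖ = |F (z.1, s)| * |G (z.2, s)| := fun s => by
      rw [norm_mul, Real.norm_eq_abs, Real.norm_eq_abs]
    calc ∑' w : S × S, ‖F (z.1, w.1) * G (z.2, w.1) * (F (z.1, w.2) * G (z.2, w.2))‖
        = (∑' s, ‖F (z.1, s) * G (z.2, s)‖) * ∑' s, ‖F (z.1, s) * G (z.2, s)‖ := by
          simp only [norm_mul (F (z.1, _) * G (z.2, _))]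
          exact (tsum_mul_tsum_of_summable_norm (hrow z).norm (hrow z).norm).symm
      _ = (∑' s, |F (z.1, s)| * |G (z.2, s)|) ^ 2 := by simp only [habs, sq]
      _ ≤ (∑' s, |F (z.1, s)| ^ 2) * ∑' s, |G (z.2, s)| ^ 2 :=
          tsum_mul_sq_le (by simpa only [sq_abs] using summable_row_sq hF z.1)
            (by simpa only [sq_abs] using summable_row_sq hG z.2)
      _ = (∑' s, F (z.1, s) ^ 2) * ∑' s, G (z.2, s) ^ 2 := by simp only [sq_abs]

theorem tsum_rowInner_sq (hF : Summable fun x => F x ^ 2) (hG : Summable fun x => G x ^ 2) :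
    ∑' z, rowInner F G z ^ 2 = ∑' w, gram F w * gram G w := by
  have hrow (z : A × B) : Summable fun s => ‖F (z.1, s) * G (z.2, s)‖ :=
    summable_norm_mul_of_sq (summable_row_sq hF z.1) (summable_row_sq hG z.2)
  calc ∑' z, rowInner F G z ^ 2
      = ∑' z : A × B, ∑' w : S × S,
          F (z.1, w.1) * G (z.2, w.1) * (F (z.1, w.2) * G (z.2, w.2)) :=
        tsum_congr fun z => by rw [rowInner, sq, tsum_mul_tsum_of_summable_norm (hrow z) (hrow z)]
    _ = ∑' w : S × S, ∑' z : A × B,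
          F (z.1, w.1) * G (z.2, w.1) * (F (z.1, w.2) * G (z.2, w.2)) :=
        (summable_rowInner_expansion hF hG).prod_symm.tsum_comm
    _ = _ := tsum_congr fun w => by
        rw [gram, gram, tsum_mul_tsum_of_summable_norm
          (summable_norm_mul_of_sq (summable_col_sq hF w.1) (summable_col_sq hF w.2))
          (summable_norm_mul_of_sq (summable_col_sq hG w.1) (summable_col_sq hG w.2))]
        exact tsum_congr fun z => by ring

theorem summable_gram_sq (hF : Summable fun x => F x ^ 2) : Summable fun w => gram F w ^ 2 :=
  have hF' : Summable fun x => (F ∘ Prod.swap) x ^ 2 := (Equiv.prodComm _ _).summable_iff.mpr hF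
  (summable_rowInner_sq hF' hF').congr fun w => by
    simp only [rowInner, gram, Function.comp_apply, Prod.swap_prod_mk]

end RowInner

-- Written with `pad`, like the index tuples in `contr`.
def splice {m n k : ℕ} (h : m + n = k) : (Fin m → ℕ) × (Fin n → ℕ) ≃ (Fin k → ℕ) where
  toFun z i := if i.val < m then pad z.1 i else pad z.2 (i - m)
  invFun x := (fun i => x ⟨i, by omega⟩, fun j => x ⟨m + j, by omega⟩)
  left_inv z := by
    ext i
    · simp [pad]
    · simp [pad]
  right_inv x := by
    funext i
    by_cases hi : i.val < m
    · simp [pad, hi]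
    · simp only [hi, if_false, pad, show i.val - m < n by omega, dif_pos]
      exact congrArg x (Fin.ext (by simp only; omega))

lemma pad_splice {m n k : ℕ} (h : m + n = k) (z : (Fin m → ℕ) × (Fin n → ℕ)) (j : ℕ) :
    pad (splice h z) j = if j < m then pad z.1 j else pad z.2 (j - m) := by
  unfold pad
  split_ifs <;> simp_all [splice, pad] <;> omega

lemma contr_splice {m n r p q : ℕ} (hp : m + r = p) (hq : n + r = q)
    (hk : m + n = p + q - 2 * r) (f : (Fin p → ℕ) → ℝ) (g : (Fin q → ℕ) → ℝ)
    (z : (Fin m → ℕ) × (Fin n → ℕ)) :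
    contr p q r f g (splice hk z) = rowInner (f ∘ splice hp) (g ∘ splice hq) z := by
  obtain rfl : p - r = m := by omega
  obtain rfl : q - r = n := by omega
  refine tsum_congr fun s => ?_
  congr 2 <;> funext i <;> simp only [pad_splice] <;> simp only [splice, Equiv.coe_fn_mk]
  · split_ifs <;> rfl
  · simp

lemma IsSym.comp_splice_comm {m n k : ℕ} (h : m + n = k) (h' : n + m = k)
    {f : (Fin k → ℕ) → ℝ} (hf : IsSym f) : f ∘ splice h' = f ∘ splice h ∘ Prod.swap := by
  funext ⟨v, u⟩
  rw [Function.comp_apply, ← hf ((finCongr h).symm.trans (finAddFlip.trans (finCongr h')))]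
  congr 1
  funext ⟨i, hi⟩
  simp only [splice, Equiv.coe_fn_mk, Function.comp_apply, Prod.swap_prod_mk, Equiv.trans_apply,
    finCongr_symm, finCongr_apply_mk]
  by_cases him : i < m
  · simp [finAddFlip_apply_mk_left him, him]
  · simp [finAddFlip_apply_mk_right (not_lt.mp him) (show i < m + n by omega), him,
      show i - m < n by omega]

lemma contr_self_splice {a r p : ℕ} (hp : a + r = p) (hk : r + r = p + p - 2 * a)
    {f : (Fin p → ℕ) → ℝ} (hf : IsSym f) (w : (Fin r → ℕ) × (Fin r → ℕ)) :
    contr p p a f f (splice hk w) = gram (f ∘ splice hp) w := by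
  rw [contr_splice (by omega) (by omega) hk, hf.comp_splice_comm hp]
  rfl

lemma recast_splice {m n k k' : ℕ} (hk : m + n = k) (hk' : m + n = k')
    (C : (Fin k → ℕ) → ℝ) (z : (Fin m → ℕ) × (Fin n → ℕ)) :
    recast k' C (splice hk' z) = C (splice hk z) := by
  unfold recast
  congr 1
  funext i
  rw [pad_splice]
  rfl

lemma nsq_contr_eq_tsum_rowInner_sq {m n r p q : ℕ} (hp : m + r = p) (hq : n + r = q)
    (f : (Fin p → ℕ) → ℝ) (g : (Fin q → ℕ) → ℝ) :
    nsq (contr p q r f g) = ∑' z, rowInner (f ∘ splice hp) (g ∘ splice hq) z ^ 2 := by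
  rw [nsq, ← (splice (by omega : m + n = p + q - 2 * r)).tsum_eq]
  exact tsum_congr fun z => by rw [contr_splice hp hq]

lemma nsq_contr_self_eq_tsum_gram_sq {a r p : ℕ} (hp : a + r = p) {f : (Fin p → ℕ) → ℝ}
    (hf : IsSym f) : nsq (contr p p a f f) = ∑' w, gram (f ∘ splice hp) w ^ 2 := by
  rw [nsq, ← (splice (by omega : r + r = p + p - 2 * a)).tsum_eq]
  exact tsum_congr fun w => by rw [contr_self_splice hp _ hf]

lemma hinner_recast_contr_self {a b r p q : ℕ} (hp : a + r = p) (hq : b + r = q)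
    {f : (Fin p → ℕ) → ℝ} {g : (Fin q → ℕ) → ℝ} (hf : IsSym f) (hg : IsSym g) :
    hinner (recast (2 * r) (contr p p a f f)) (recast (2 * r) (contr q q b g g))
      = ∑' w, gram (f ∘ splice hp) w * gram (g ∘ splice hq) w := by
  have hka : r + r = p + p - 2 * a := by omega
  have hkb : r + r = q + q - 2 * b := by omega
  rw [hinner, ← (splice (two_mul r).symm).tsum_eq]
  exact tsum_congr fun w => by
    rw [recast_splice hka, recast_splice hkb, contr_self_splice hp hka hf,
      contr_self_splice hq hkb hg]

theorem stmt_5_general (p q r : ℕ) (hr2 : r < min p q)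
    (f : (Fin p → ℕ) → ℝ) (g : (Fin q → ℕ) → ℝ)
    (hf : IsSym f) (hg : IsSym g)
    (hfs : Summable fun x => f x ^ 2) (hgs : Summable fun x => g x ^ 2) :
    nsq (contr p q r f g)
      = hinner (recast (2*r) (contr p p (p - r) f f)) (recast (2*r) (contr q q (q - r) g g))
    ∧ nsq (contr p q r f g)
      ≤ (1/2) * (nsq (contr p p (p - r) f f) + nsq (contr q q (q - r) g g)) := by
  obtain ⟨a, rfl⟩ : ∃ a, p = a + r := ⟨p - r, by omega⟩
  obtain ⟨b, rfl⟩ : ∃ b, q = b + r := ⟨q - r, by omega⟩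
  rw [Nat.add_sub_cancel, Nat.add_sub_cancel]
  have hFs : Summable fun z => (f ∘ splice (rfl : a + r = a + r)) z ^ 2 :=
    (splice rfl).summable_iff.mpr hfs
  have hGs : Summable fun z => (g ∘ splice (rfl : b + r = b + r)) z ^ 2 :=
    (splice rfl).summable_iff.mpr hgs
  rw [nsq_contr_eq_tsum_rowInner_sq rfl rfl, tsum_rowInner_sq hFs hGs,
    hinner_recast_contr_self rfl rfl hf hg, nsq_contr_self_eq_tsum_gram_sq rfl hf,
    nsq_contr_self_eq_tsum_gram_sq rfl hg]
  exact ⟨rfl, tsum_mul_le_half_add_sq (summable_gram_sq hFs) (summable_gram_sq hGs)⟩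

theorem stmt_5 (p q r : ℕ) (hr1 : 1 ≤ r) (hr2 : r < min p q)
    (f : (Fin p → ℕ) → ℝ) (g : (Fin q → ℕ) → ℝ)
    (hf : IsSym f) (hg : IsSym g)
    (hfs : Summable fun x => f x ^ 2) (hgs : Summable fun x => g x ^ 2) :
    nsq (contr p q r f g)
      = hinner (recast (2*r) (contr p p (p - r) f f)) (recast (2*r) (contr q q (q - r) g g))
    ∧ nsq (contr p q r f g)
      ≤ (1/2) * (nsq (contr p p (p - r) f f) + nsq (contr q q (q - r) g g)) :=
  stmt_5_general p q r hr2 f g hf hg hfs hgs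
end

section
/- Let H be a real separable Hilbert space, and let f ∈ H^⊙p, g ∈ H^⊙q be symmetric tensors with p < q. Then ‖f ⊗_p g‖²_{H^⊗(q−p)} ≤ ‖f‖²_{H^⊗p} · ‖g ⊗_{q−p} g‖_{H^⊗2p}. -/
open Finset

/-!
Split the indices of `g` as `(x, s)` with `x` of length `q - p` and `s` of length `p`, and put
`A (s, t) = ∑ₓ g (x, s) g (x, t)`. Expanding the square,
`‖f ⊗_p g‖² = ∑ₓ (∑ₛ f s g (x, s))² = ∑_{s,t} f s f t A (s, t)`,
and Cauchy–Schwarz over pairs `(s, t)` bounds this by `‖f ⊗ f‖ ‖A‖ = ‖f‖² ‖A‖`.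
By symmetry of `g`, `A` is `g ⊗_{q-p} g`.
-/

section CauchySchwarz

variable {ι α β : Type*}

theorem Summable.mul_of_summable_sq {u v : ι → ℝ} (hu : Summable fun i => u i ^ 2)
    (hv : Summable fun i => v i ^ 2) : Summable fun i => u i * v i :=
  Summable.of_norm_bounded ((hu.add hv).div_const 2) fun i => by
    rw [Real.norm_eq_abs, abs_mul, le_div_iff₀ two_pos, ← sq_abs (u i), ← sq_abs (v i)]
    linarith [two_mul_le_add_sq |u i| |v i|]

theorem sq_tsum_mul_le {u v : ι → ℝ} (hu : Summable fun i => u i ^ 2)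
    (hv : Summable fun i => v i ^ 2) :
    (∑' i, u i * v i) ^ 2 ≤ (∑' i, u i ^ 2) * ∑' i, v i ^ 2 :=
  le_of_tendsto_of_tendsto' ((hu.mul_of_summable_sq hv).hasSum.pow 2)
    (Filter.Tendsto.mul hu.hasSum hv.hasSum) fun s => sum_mul_sq_le_sq_mul_sq s u v

theorem tsum_mul_le_sqrt_mul_sqrt {u v : ι → ℝ} (hu : Summable fun i => u i ^ 2)
    (hv : Summable fun i => v i ^ 2) :
    ∑' i, u i * v i ≤ √(∑' i, u i ^ 2) * √(∑' i, v i ^ 2) := by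
  rw [← Real.sqrt_mul (tsum_nonneg fun i => sq_nonneg _)]
  exact (le_abs_self _).trans (Real.abs_le_sqrt (sq_tsum_mul_le hu hv))

theorem summable_sq_mul_prod {f : α → ℝ} (hf : Summable fun s => f s ^ 2) :
    Summable fun w : α × α => (f w.1 * f w.2) ^ 2 := by
  simpa only [mul_pow] using
    hf.mul_of_nonneg hf (fun s => sq_nonneg (f s)) fun s => sq_nonneg (f s)

theorem tsum_sq_mul_prod {f : α → ℝ} (hf : Summable fun s => f s ^ 2) :
    ∑' w : α × α, (f w.1 * f w.2) ^ 2 = (∑' s, f s ^ 2) ^ 2 := by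
  have hf' : Summable fun s => ‖f s ^ 2‖ := by simpa using hf
  simp_rw [sq (∑' s, f s ^ 2), tsum_mul_tsum_of_summable_norm hf' hf', mul_pow]

variable {G : β → α → ℝ}

theorem summable_sq_tsum_mul_mul (hG : Summable fun z : β × α => G z.1 z.2 ^ 2) :
    Summable fun w : α × α => (∑' x, G x w.1 * G x w.2) ^ 2 := by
  have hcol : ∀ s, Summable fun x => G x s ^ 2 := hG.prod_symm.prod_factor
  refine Summable.of_nonneg_of_le (fun w => sq_nonneg _)
    (fun w => sq_tsum_mul_le (hcol w.1) (hcol w.2)) ?_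
  exact hG.prod_symm.prod.mul_of_nonneg hG.prod_symm.prod
    (fun s => tsum_nonneg fun x => sq_nonneg _) fun s => tsum_nonneg fun x => sq_nonneg _

theorem tsum_sq_tsum_mul_eq {f : α → ℝ} (hf : Summable fun s => f s ^ 2)
    (hG : Summable fun z : β × α => G z.1 z.2 ^ 2) :
    ∑' x, (∑' s, f s * G x s) ^ 2 = ∑' w : α × α, f w.1 * f w.2 * ∑' x, G x w.1 * G x w.2 := by
  have hrow : ∀ x, Summable fun s => ‖f s * G x s‖ := fun x =>
    (hf.mul_of_summable_sq (hG.prod_factor x)).norm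
  have hfG : Summable fun z : α × (β × α) => (f z.1 * G z.2.1 z.2.2) ^ 2 := by
    simpa only [mul_pow] using
      hf.mul_of_nonneg hG (fun s => sq_nonneg (f s)) fun z => sq_nonneg (G z.1 z.2)
  -- regrouped as `(f s * G x t) * (f t * G x s)`, the summand is a product of two
  -- square-summable families
  have hsum : Summable fun z : β × (α × α) => f z.2.1 * G z.1 z.2.1 * (f z.2.2 * G z.1 z.2.2) := by
    have hu := hfG.comp_injective (i := fun z : β × (α × α) => (z.2.1, z.1, z.2.2))
      fun a b h => by simp_all [Prod.ext_iff]
    have hv := hfG.comp_injective (i := fun z : β × (α × α) => (z.2.2, z.1, z.2.1))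
      fun a b h => by simp_all [Prod.ext_iff]
    refine (Summable.mul_of_summable_sq hu hv).congr fun z => ?_
    ring
  calc ∑' x, (∑' s, f s * G x s) ^ 2
      = ∑' (x) (w : α × α), f w.1 * G x w.1 * (f w.2 * G x w.2) := by
        simp_rw [sq, tsum_mul_tsum_of_summable_norm (hrow _) (hrow _)]
    _ = ∑' (w : α × α) (x), f w.1 * G x w.1 * (f w.2 * G x w.2) := hsum.tsum_comm.symm
    _ = ∑' w : α × α, f w.1 * f w.2 * ∑' x, G x w.1 * G x w.2 := by
        simp_rw [← tsum_mul_left]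
        exact tsum_congr fun w => tsum_congr fun x => by ring

theorem tsum_sq_tsum_mul_le {f : α → ℝ} (hf : Summable fun s => f s ^ 2)
    (hG : Summable fun z : β × α => G z.1 z.2 ^ 2) :
    ∑' x, (∑' s, f s * G x s) ^ 2 ≤
      (∑' s, f s ^ 2) * √(∑' w : α × α, (∑' x, G x w.1 * G x w.2) ^ 2) := by
  rw [tsum_sq_tsum_mul_eq hf hG]
  calc _ ≤ √(∑' w : α × α, (f w.1 * f w.2) ^ 2) *
          √(∑' w : α × α, (∑' x, G x w.1 * G x w.2) ^ 2) :=
        tsum_mul_le_sqrt_mul_sqrt (summable_sq_mul_prod hf) (summable_sq_tsum_mul_mul hG)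
    _ = _ := by rw [tsum_sq_mul_prod hf, Real.sqrt_sq (tsum_nonneg fun s => sq_nonneg _)]

end CauchySchwarz

@[simp]
theorem pad_apply {k : ℕ} (x : Fin k → ℕ) (i : Fin k) : pad x i = x i := by
  simp [pad]

theorem nsq_recast {k k' : ℕ} (h : k = k') (F : (Fin k → ℕ) → ℝ) :
    nsq (recast k' F) = nsq F := by
  subst h
  simp [recast, nsq]

/-- The concatenation of `x` and `s`, as a tuple of any length `k` (entries past `m + n` are `0`),
so that it fits the index lengths such as `p + q - 2 * r` occurring in `contr`. -/
def cat {m n : ℕ} (k : ℕ) (x : Fin m → ℕ) (s : Fin n → ℕ) : Fin k → ℕ :=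
  fun i => if i.val < m then pad x i else pad s (i - m)

theorem pad_cat {m n k : ℕ} (hk : m + n ≤ k) (x : Fin m → ℕ) (s : Fin n → ℕ) (j : ℕ) :
    pad (cat k x s) j = if j < m then pad x j else pad s (j - m) := by
  by_cases hj : j < k
  · simp [pad, cat, hj]
  · simp [pad, hj, show ¬ j < m by omega, show ¬ j - m < n by omega]

def catEquiv {m n k : ℕ} (h : m + n = k) : (Fin m → ℕ) × (Fin n → ℕ) ≃ (Fin k → ℕ) where
  toFun z := cat k z.1 z.2
  invFun y := (fun i => y ⟨i, by omega⟩, fun j => y ⟨m + j, by omega⟩)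
  left_inv := by
    rintro ⟨x, s⟩
    ext i <;> simp [cat]
  right_inv := by
    intro y
    ext i
    by_cases hi : i.val < m
    · simp [cat, pad, hi]
    · simp [cat, pad, hi, show i.val - m < n by omega, Nat.add_sub_cancel' (Nat.le_of_not_lt hi)]

theorem IsSym.apply_cat_comm {m n k : ℕ} (h : m + n = k) {g : (Fin k → ℕ) → ℝ} (hg : IsSym g)
    (x : Fin m → ℕ) (y : Fin n → ℕ) : g (cat k x y) = g (cat k y x) := by
  subst h
  rw [eq_comm, ← hg (finAddFlip.trans (finCongr (add_comm n m)))]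
  congr 1
  ext ⟨i, hi⟩
  by_cases him : i < m
  · simp [cat, finAddFlip_apply_mk_left him, him]
  · simp [cat, finAddFlip_apply_mk_right (Nat.le_of_not_lt him) hi, him,
      show i - m < n by omega]

theorem contr_full_eq_recast (p q : ℕ) (f : (Fin p → ℕ) → ℝ) (g : (Fin q → ℕ) → ℝ) :
    contr p q p f g =
      recast (p + q - 2 * p) fun x : Fin (q - p) → ℕ => ∑' s, f s * g (cat q x s) := by
  ext y
  refine tsum_congr fun s => ?_
  congr 2 <;> ext i
  · simp
  · by_cases hi : i.val < q - p <;> simp [cat, pad, hi]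

theorem contr_apply_cat {p q : ℕ} (hpq : p ≤ q) (g h : (Fin q → ℕ) → ℝ) (s t : Fin p → ℕ) :
    contr q q (q - p) g h (cat _ s t) = ∑' u : Fin (q - p) → ℕ, g (cat q s u) * h (cat q t u) := by
  simp only [contr, Nat.sub_sub_self hpq, pad_cat (show p + p ≤ q + q - 2 * (q - p) by omega)]
  refine tsum_congr fun u => ?_
  congr 2 <;> ext i <;> by_cases hi : i.val < p <;> simp [cat, hi]

theorem nsq_contr_eq_tsum_sq {p q : ℕ} (hpq : p ≤ q) {g : (Fin q → ℕ) → ℝ} (hg : IsSym g) :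
    nsq (contr q q (q - p) g g) = ∑' w : (Fin p → ℕ) × (Fin p → ℕ),
      (∑' x : Fin (q - p) → ℕ, g (cat q x w.1) * g (cat q x w.2)) ^ 2 := by
  rw [nsq, ← (catEquiv (show p + p = q + q - 2 * (q - p) by omega)).tsum_eq]
  refine tsum_congr fun w => ?_
  simp only [catEquiv, Equiv.coe_fn_mk, contr_apply_cat hpq,
    hg.apply_cat_comm (show p + (q - p) = q by omega)]

theorem stmt_6_general (p q : ℕ) (hpq : p < q)
    (f : (Fin p → ℕ) → ℝ) (g : (Fin q → ℕ) → ℝ)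
    (hg : IsSym g)
    (hfs : Summable fun x => f x ^ 2) (hgs : Summable fun x => g x ^ 2) :
    nsq (contr p q p f g) ≤ nsq f * Real.sqrt (nsq (contr q q (q - p) g g)) := by
  have hG : Summable fun z : (Fin (q - p) → ℕ) × (Fin p → ℕ) => g (cat q z.1 z.2) ^ 2 :=
    (catEquiv (show q - p + p = q by omega)).summable_iff.mpr hgs
  rw [contr_full_eq_recast, nsq_recast (by omega), nsq_contr_eq_tsum_sq hpq.le hg]
  exact tsum_sq_tsum_mul_le hfs hG

theorem stmt_6 (p q : ℕ) (hp : 1 ≤ p) (hpq : p < q)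
    (f : (Fin p → ℕ) → ℝ) (g : (Fin q → ℕ) → ℝ)
    (hf : IsSym f) (hg : IsSym g)
    (hfs : Summable fun x => f x ^ 2) (hgs : Summable fun x => g x ^ 2) :
    nsq (contr p q p f g) ≤ nsq f * Real.sqrt (nsq (contr q q (q - p) g g)) :=
  stmt_6_general p q hpq f g hg hfs hgs
end

section
/- Let Z be a standard Gaussian random variable. Then for every integer p ≥ 1, E[H_p(Z)⁴] − 3 · E[H_p(Z)²]² ≥ 0, where H_p is the p-th (probabilists') Hermite polynomial. Equivalently, the fourth cumulant of any Hermite polynomial of a standard Gaussian is nonnegative. -/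
/-!
Write `a = H_p²` and `b = H_{2p}`. Gaussian integration by parts gives `E[H_n q] = E[q⁽ⁿ⁾]`, so
`E[a] = p!`, `E[b] = 0`, `E[b a] = E[b²] = (2p)!` (as `a` is monic of degree `2p`). Expanding the
square of `R = a - p! - b` then yields `E[H_p⁴] - 3 (p!)² = E[R²] + (2p)! - 2 (p!)²`, and
`(2p)! = C(2p, p) (p!)² ≥ 2 (p!)²`.
-/

open MeasureTheory ProbabilityTheory Polynomial NNReal
open scoped Nat

namespace Polynomial

theorem iterate_derivative_eq_C_of_natDegree_le {R : Type*} [Semiring R] {q : R[X]} {n : ℕ}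
    (hq : q.natDegree ≤ n) : derivative^[n] q = C (n ! * q.coeff n) := by
  rw [eq_C_of_natDegree_le_zero ((natDegree_iterate_derivative q n).trans (by omega)),
    coeff_iterate_derivative, zero_add, Nat.descFactorial_self, nsmul_eq_mul]

end Polynomial

lemma integrable_gaussianPDFReal_smul_iff {μ : ℝ} {v : ℝ≥0} (hv : v ≠ 0) {f : ℝ → ℝ} :
    Integrable (fun x => gaussianPDFReal μ v x • f x) ↔ Integrable f (gaussianReal μ v) := by
  rw [gaussianReal_of_var_ne_zero _ hv, integrable_withDensity_iff_integrable_smul'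
    (measurable_gaussianPDF μ v) (ae_of_all _ fun _ => gaussianPDF_lt_top)]
  simp only [gaussianPDF, ENNReal.toReal_ofReal (gaussianPDFReal_nonneg μ v _)]

lemma integrable_eval_gaussianReal (μ : ℝ) (v : ℝ≥0) (q : ℝ[X]) :
    Integrable (fun x => q.eval x) (gaussianReal μ v) := by
  induction q using Polynomial.induction_on' with
  | add p q hp hq => simpa using hp.fun_add hq
  | monomial n a =>
    simpa using (integrable_pow_of_mem_interior_integrableExpSet
      (by simp [integrableExpSet_id_gaussianReal]) n (X := id)).const_mul a

lemma gaussianPDFReal_zero_one :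
    gaussianPDFReal 0 1 = fun x => (√(2 * Real.pi))⁻¹ * Real.exp (-(x ^ 2 / 2)) := by
  ext x; simp [gaussianPDFReal, neg_div]

lemma hasDerivAt_gaussianPDFReal_zero_one (x : ℝ) :
    HasDerivAt (gaussianPDFReal 0 1) (-x * gaussianPDFReal 0 1 x) x := by
  have h : HasDerivAt (fun y : ℝ => -(y ^ 2 / 2)) (-x) x := by
    simpa using ((hasDerivAt_pow 2 x).div_const 2).fun_neg
  rw [gaussianPDFReal_zero_one]
  exact (h.exp.const_mul _).congr_deriv (by ring)

noncomputable def gaussianExpectation : ℝ[X] →ₗ[ℝ] ℝ where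
  toFun q := ∫ x, q.eval x ∂gaussianReal 0 1
  map_add' p q := by
    simp only [eval_add]
    exact integral_add (integrable_eval_gaussianReal 0 1 p) (integrable_eval_gaussianReal 0 1 q)
  map_smul' a q := by
    simp only [eval_smul, smul_eq_mul, RingHom.id_apply]
    exact integral_const_mul a _

lemma gaussianExpectation_apply (q : ℝ[X]) :
    gaussianExpectation q = ∫ x, q.eval x ∂gaussianReal 0 1 := rfl

lemma gaussianExpectation_C (a : ℝ) : gaussianExpectation (C a) = a := by
  simp [gaussianExpectation_apply]

lemma gaussianExpectation_C_mul (a : ℝ) (q : ℝ[X]) :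
    gaussianExpectation (C a * q) = a * gaussianExpectation q := by
  rw [C_mul', map_smul, smul_eq_mul]

lemma gaussianExpectation_sq_nonneg (q : ℝ[X]) : 0 ≤ gaussianExpectation (q ^ 2) :=
  integral_nonneg fun x => by simpa using sq_nonneg (q.eval x)

/-- Gaussian integration by parts (Stein's identity) for polynomials. -/
lemma gaussianExpectation_X_mul (q : ℝ[X]) :
    gaussianExpectation (X * q) = gaussianExpectation (derivative q) := by
  set ρ := gaussianPDFReal 0 1
  have hderiv : ∀ x, HasDerivAt (fun y => ρ y * q.eval y)
      (ρ x • (derivative q - X * q).eval x) x := fun x =>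
    ((hasDerivAt_gaussianPDFReal_zero_one x).mul (q.hasDerivAt x)).congr_deriv
      (by simp only [eval_sub, eval_mul, eval_X, smul_eq_mul]; ring)
  have hint : ∀ r : ℝ[X], Integrable (fun x => ρ x • r.eval x) :=
    fun r => (integrable_gaussianPDFReal_smul_iff one_ne_zero).2
      (integrable_eval_gaussianReal 0 1 r)
  have hzero : gaussianExpectation (derivative q - X * q) = 0 := by
    rw [gaussianExpectation_apply, integral_gaussianReal_eq_integral_smul one_ne_zero]
    exact integral_eq_zero_of_hasDerivAt_of_integrable hderiv (hint _) (hint q)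
  rw [map_sub, sub_eq_zero] at hzero
  exact hzero.symm

noncomputable def realHermite (n : ℕ) : ℝ[X] := (hermite n).map (Int.castRingHom ℝ)

lemma realHermite_zero : realHermite 0 = 1 := by simp [realHermite]

lemma realHermite_succ (n : ℕ) :
    realHermite (n + 1) = X * realHermite n - derivative (realHermite n) := by
  simp [realHermite, hermite_succ]

lemma realHermite_monic (n : ℕ) : (realHermite n).Monic := (hermite_monic n).map _

lemma natDegree_realHermite (n : ℕ) : (realHermite n).natDegree = n := by
  rw [realHermite, natDegree_map_eq_of_injective (RingHom.injective_int _), natDegree_hermite]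

lemma coeff_realHermite_self (n : ℕ) : (realHermite n).coeff n = 1 := by
  simp [realHermite, coeff_hermite_self]

lemma aeval_hermite (n : ℕ) (x : ℝ) : aeval x (hermite n) = (realHermite n).eval x := by
  rw [realHermite, aeval_def, eval₂_eq_eval_map, algebraMap_int_eq]

lemma gaussianExpectation_realHermite_mul (n : ℕ) (q : ℝ[X]) :
    gaussianExpectation (realHermite n * q) = gaussianExpectation (derivative^[n] q) := by
  induction n generalizing q with
  | zero => simp [realHermite_zero]
  | succ n ih =>
    have hstep : realHermite (n + 1) * q
        = X * (realHermite n * q) - derivative (realHermite n) * q := by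
      rw [realHermite_succ]; ring
    rw [hstep, map_sub, gaussianExpectation_X_mul, derivative_mul, map_add, add_sub_cancel_left,
      ih, Function.iterate_succ_apply]

lemma gaussianExpectation_realHermite_mul_of_natDegree_le {n : ℕ} {q : ℝ[X]}
    (hq : q.natDegree ≤ n) : gaussianExpectation (realHermite n * q) = n ! * q.coeff n := by
  rw [gaussianExpectation_realHermite_mul, iterate_derivative_eq_C_of_natDegree_le hq,
    gaussianExpectation_C]

lemma gaussianExpectation_realHermite_sq (n : ℕ) :
    gaussianExpectation (realHermite n ^ 2) = n ! := by
  rw [sq, gaussianExpectation_realHermite_mul_of_natDegree_le (natDegree_realHermite n).le,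
    coeff_realHermite_self, mul_one]

lemma gaussianExpectation_realHermite_pow_four (p : ℕ) (hp : 1 ≤ p) :
    gaussianExpectation (realHermite p ^ 4) - 3 * gaussianExpectation (realHermite p ^ 2) ^ 2
      = gaussianExpectation ((realHermite p ^ 2 - C (p ! : ℝ) - realHermite (2 * p)) ^ 2)
        + (2 * p)! - 2 * p ! ^ 2 := by
  set a := realHermite p ^ 2
  set b := realHermite (2 * p)
  have ha_deg : a.natDegree = 2 * p := by
    rw [(realHermite_monic p).natDegree_pow, natDegree_realHermite, mul_comm]
  have ha_coeff : a.coeff (2 * p) = 1 := ha_deg ▸ ((realHermite_monic p).pow 2).coeff_natDegree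
  have hEa : gaussianExpectation a = p ! := gaussianExpectation_realHermite_sq p
  have hEb : gaussianExpectation b = 0 := by
    simpa [coeff_one, show 2 * p ≠ 0 by omega] using
      gaussianExpectation_realHermite_mul_of_natDegree_le (n := 2 * p) (q := 1) (by simp)
  have hEba : gaussianExpectation (b * a) = (2 * p)! := by
    rw [gaussianExpectation_realHermite_mul_of_natDegree_le ha_deg.le, ha_coeff, mul_one]
  have hEbb : gaussianExpectation (b ^ 2) = (2 * p)! := gaussianExpectation_realHermite_sq _
  have hexpand : (a - C (p ! : ℝ) - b) ^ 2 = a ^ 2 + C ((p ! : ℝ) ^ 2) + C (2 * p ! : ℝ) * b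
      + b ^ 2 - C (2 * p ! : ℝ) * a - C 2 * (b * a) := by
    simp only [map_mul, map_pow, map_ofNat]; ring
  rw [hexpand, show a ^ 2 = realHermite p ^ 4 by ring]
  simp only [map_add, map_sub, gaussianExpectation_C_mul, gaussianExpectation_C]
  rw [hEa, hEb, hEba, hEbb]
  ring

lemma two_mul_factorial_sq_le_factorial_two_mul {p : ℕ} (hp : 1 ≤ p) :
    2 * p ! ^ 2 ≤ (2 * p)! := by
  have h := Nat.choose_mul_factorial_mul_factorial (show p ≤ 2 * p by omega)
  rw [show 2 * p - p = p by omega, ← Nat.centralBinom_eq_two_mul_choose] at h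
  calc 2 * p ! ^ 2 ≤ p.centralBinom * p ! ^ 2 :=
        Nat.mul_le_mul_right _ (Nat.two_le_centralBinom p hp)
    _ = (2 * p)! := by rw [← h]; ring

theorem stmt_10 (p : ℕ) (hp : 1 ≤ p) :
    0 ≤ (∫ x, (Polynomial.aeval x (Polynomial.hermite p) : ℝ)^4 ∂(gaussianReal 0 1))
        - 3 * (∫ x, (Polynomial.aeval x (Polynomial.hermite p) : ℝ)^2 ∂(gaussianReal 0 1))^2 := by
  have hmoment (k : ℕ) : ∫ x, (aeval x (hermite p) : ℝ) ^ k ∂gaussianReal 0 1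
      = gaussianExpectation (realHermite p ^ k) := by
    simp only [gaussianExpectation_apply, eval_pow, aeval_hermite]
  have hfact : (2 * p ! ^ 2 : ℝ) ≤ (2 * p)! :=
    mod_cast two_mul_factorial_sq_le_factorial_two_mul hp
  rw [hmoment, hmoment, gaussianExpectation_realHermite_pow_four p hp]
  linarith [gaussianExpectation_sq_nonneg (realHermite p ^ 2 - C (p ! : ℝ) - realHermite (2 * p))]
end

section
/- Let H be a real Hilbert space (identified with L²([0,T])), and let f, g ∈ H^⊙p be symmetric with 1 ≤ r ≤ p − 1. Suppose that for some constants A, B ≥ 0 one has ‖f ⊗_{p−r'} f‖²_{H^⊗2r'} ≤ (r'!)²((p−r')!)²/(p!)⁴ · A and ‖g ⊗_{p−r'} g‖²_{H^⊗2r'} ≤ (r'!)²((p−r')!)²/(p!)⁴ · B for all 1 ≤ r' ≤ p−1. Then Σ_{r=1}^{p−1} ((r−1)!)² C(p−1, r−1)⁴ (2p−2r)! · ‖f ⊗̃_r g‖²_{H^⊗(2p−2r)} ≤ (1/p²) · (A + B)/2 · Σ_{r=1}^{p−1} C(2r, r) · p². -/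
open Finset

/-!
Write `f` as a family of rows `F_a = f(a, ·) ∈ ℓ²`, `a` running over the first `p - r` arguments.
Then `(f ⊗_r g)(a, b) = ⟪F_a, G_b⟫`, so
`‖f ⊗_r g‖² = ∑_{a,b} ⟪F_a, G_b⟫² = ⟪∑_a F_a ⊗ F_a, ∑_b G_b ⊗ G_b⟫`,
and, `f` being symmetric, `∑_a F_a ⊗ F_a` is `f ⊗_{p-r} f`. Cauchy–Schwarz and AM–GM give
`‖f ⊗_r g‖² ≤ (‖f ⊗_{p-r} f‖² + ‖g ⊗_{p-r} g‖²) / 2`, and symmetrization, an average of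
isometries, does not increase the norm. With the hypotheses, the weight of the `r`-th term
collapses to `C(2(p-r), p-r) (r/p²)² ≤ C(2(p-r), p-r)`, and `r ↦ p - r` reindexes the sum.
-/

open scoped InnerProductSpace ENNReal lp

section InnerProduct

variable {E α β : Type*} [NormedAddCommGroup E] [InnerProductSpace ℝ E] {x : α → E} {y : β → E}

theorem HasSum.inner {X Y : E} (hx : HasSum x X) (hy : HasSum y Y)
    (hxy : Summable fun ab : α × β => ⟪x ab.1, y ab.2⟫_ℝ) :
    HasSum (fun ab : α × β => ⟪x ab.1, y ab.2⟫_ℝ) ⟪X, Y⟫_ℝ := by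
  obtain ⟨u, hu⟩ := hxy
  have hrows : HasSum (fun a => ⟪x a, Y⟫_ℝ) u :=
    hu.prod_fiberwise fun a => (innerSL ℝ (x a)).hasSum hy
  have hcols : HasSum (fun a => ⟪x a, Y⟫_ℝ) ⟪X, Y⟫_ℝ := by
    simpa only [innerSL_apply_apply, real_inner_comm Y] using (innerSL ℝ Y).hasSum hx
  rwa [hcols.unique hrows]

theorem summable_inner_of_summable_norm (hx : Summable fun a => ‖x a‖)
    (hy : Summable fun b => ‖y b‖) : Summable fun ab : α × β => ⟪x ab.1, y ab.2⟫_ℝ :=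
  .of_norm_bounded
    (summable_mul_of_summable_norm (f := fun a => ‖x a‖) (g := fun b => ‖y b‖)
      (by simpa only [norm_norm] using hx) (by simpa only [norm_norm] using hy))
    fun ab => norm_inner_le_norm (𝕜 := ℝ) _ _

end InnerProduct

section EllTwo

variable {γ δ : Type*}

theorem memℓp_two_iff_summable_sq {f : γ → ℝ} : Memℓp f 2 ↔ Summable fun i => f i ^ 2 := by
  simp [memℓp_gen_iff (by norm_num : 0 < (2 : ℝ≥0∞).toReal)]

theorem lp.real_inner_two_eq_tsum (f g : ℓ²(γ, ℝ)) : ⟪f, g⟫_ℝ = ∑' i, f i * g i := by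
  simp [lp.inner_eq_tsum, mul_comm]

theorem lp.summable_norm_mul_two (f g : ℓ²(γ, ℝ)) : Summable fun i => ‖f i * g i‖ := by
  simpa only [norm_mul] using lp.summable_mul (p := 2) (q := 2) .two_two f g

theorem lp.summable_norm_sq_two (u : ℓ²(γ, ℝ)) : Summable fun i => ‖u i ^ 2‖ := by
  simpa only [norm_pow, Real.norm_eq_abs, sq_abs] using memℓp_two_iff_summable_sq.mp u.2

theorem lp.memℓp_two_mul (u : ℓ²(γ, ℝ)) (v : ℓ²(δ, ℝ)) :
    Memℓp (fun st : γ × δ => u st.1 * v st.2) 2 := by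
  rw [memℓp_two_iff_summable_sq]
  simpa only [mul_pow] using
    summable_mul_of_summable_norm (lp.summable_norm_sq_two u) (lp.summable_norm_sq_two v)

noncomputable def lp.tmul (u : ℓ²(γ, ℝ)) (v : ℓ²(δ, ℝ)) : ℓ²(γ × δ, ℝ) :=
  ⟨fun st => u st.1 * v st.2, lp.memℓp_two_mul u v⟩

theorem lp.tmul_apply (u : ℓ²(γ, ℝ)) (v : ℓ²(δ, ℝ)) (st : γ × δ) :
    lp.tmul u v st = u st.1 * v st.2 := rfl

theorem lp.inner_tmul (u u' : ℓ²(γ, ℝ)) (v v' : ℓ²(δ, ℝ)) :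
    ⟪lp.tmul u v, lp.tmul u' v'⟫_ℝ = ⟪u, u'⟫_ℝ * ⟪v, v'⟫_ℝ := by
  simp only [lp.real_inner_two_eq_tsum, lp.tmul_apply,
    tsum_mul_tsum_of_summable_norm (lp.summable_norm_mul_two u u') (lp.summable_norm_mul_two v v')]
  exact tsum_congr fun st => by ring

theorem lp.norm_tmul_self (u : ℓ²(γ, ℝ)) : ‖lp.tmul u u‖ = ‖u‖ ^ 2 := by
  have h := lp.inner_tmul u u u u
  simp only [real_inner_self_eq_norm_sq, ← mul_pow] at h
  rw [← sq_eq_sq₀ (norm_nonneg _) (by positivity), h]; ring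

end EllTwo

section HilbertSchmidt

variable {α β γ : Type*}

theorem lp.norm_sq_two_eq_tsum (f : ℓ²(γ, ℝ)) : ‖f‖ ^ 2 = ∑' i, f i ^ 2 := by
  rw [← real_inner_self_eq_norm_sq, lp.real_inner_two_eq_tsum]
  simp only [sq]

theorem lp.summable_norm_tmul_self {u : α → ℓ²(γ, ℝ)} (hu : Summable fun a => ‖u a‖ ^ 2) :
    Summable fun a => ‖lp.tmul (u a) (u a)‖ := by
  simpa only [lp.norm_tmul_self] using hu

theorem lp.summable_tmul_self {u : α → ℓ²(γ, ℝ)} (hu : Summable fun a => ‖u a‖ ^ 2) :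
    Summable fun a => lp.tmul (u a) (u a) :=
  .of_norm (lp.summable_norm_tmul_self hu)

theorem lp.tsum_tmul_self_apply {u : α → ℓ²(γ, ℝ)} (hu : Summable fun a => ‖u a‖ ^ 2)
    (st : γ × γ) : (∑' a, lp.tmul (u a) (u a)) st = ∑' a, u a st.1 * u a st.2 :=
  (lp.evalCLM ℝ (fun _ : γ × γ => ℝ) 2 st).map_tsum (lp.summable_tmul_self hu)

theorem lp.hasSum_sq_inner {u : α → ℓ²(γ, ℝ)} {v : β → ℓ²(γ, ℝ)}
    (hu : Summable fun a => ‖u a‖ ^ 2) (hv : Summable fun b => ‖v b‖ ^ 2) :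
    HasSum (fun ab : α × β => ⟪u ab.1, v ab.2⟫_ℝ ^ 2)
      ⟪∑' a, lp.tmul (u a) (u a), ∑' b, lp.tmul (v b) (v b)⟫_ℝ := by
  have hsq (ab : α × β) : ⟪u ab.1, v ab.2⟫_ℝ ^ 2
      = ⟪lp.tmul (u ab.1) (u ab.1), lp.tmul (v ab.2) (v ab.2)⟫_ℝ := by
    rw [lp.inner_tmul, sq]
  have hsummable := summable_inner_of_summable_norm (lp.summable_norm_tmul_self hu)
    (lp.summable_norm_tmul_self hv)
  have hsum := (lp.summable_tmul_self hu).hasSum.inner (lp.summable_tmul_self hv).hasSum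
    hsummable
  simpa only [hsq] using hsum

theorem summable_sq_tsum_mul_and_le (F : α → γ → ℝ) (G : β → γ → ℝ)
    (hF : Summable fun q : α × γ => F q.1 q.2 ^ 2) (hG : Summable fun q : β × γ => G q.1 q.2 ^ 2) :
    Summable (fun ab : α × β => (∑' s, F ab.1 s * G ab.2 s) ^ 2) ∧
      ∑' ab : α × β, (∑' s, F ab.1 s * G ab.2 s) ^ 2
        ≤ (∑' st : γ × γ, (∑' a, F a st.1 * F a st.2) ^ 2
          + ∑' st : γ × γ, (∑' b, G b st.1 * G b st.2) ^ 2) / 2 := by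
  let u a : ℓ²(γ, ℝ) := ⟨F a, memℓp_two_iff_summable_sq.mpr (hF.prod_factor a)⟩
  let v b : ℓ²(γ, ℝ) := ⟨G b, memℓp_two_iff_summable_sq.mpr (hG.prod_factor b)⟩
  have hu : Summable fun a => ‖u a‖ ^ 2 := by
    simpa only [lp.norm_sq_two_eq_tsum] using
      ((summable_prod_of_nonneg fun _ => sq_nonneg _).mp hF).2
  have hv : Summable fun b => ‖v b‖ ^ 2 := by
    simpa only [lp.norm_sq_two_eq_tsum] using
      ((summable_prod_of_nonneg fun _ => sq_nonneg _).mp hG).2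
  set M := ∑' a, lp.tmul (u a) (u a)
  set N := ∑' b, lp.tmul (v b) (v b)
  have hM : ‖M‖ ^ 2 = ∑' st : γ × γ, (∑' a, F a st.1 * F a st.2) ^ 2 := by
    simp only [lp.norm_sq_two_eq_tsum, M, lp.tsum_tmul_self_apply hu]; rfl
  have hN : ‖N‖ ^ 2 = ∑' st : γ × γ, (∑' b, G b st.1 * G b st.2) ^ 2 := by
    simp only [lp.norm_sq_two_eq_tsum, N, lp.tsum_tmul_self_apply hv]; rfl
  have hsum := lp.hasSum_sq_inner hu hv
  simp only [lp.real_inner_two_eq_tsum (u _)] at hsum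
  refine ⟨hsum.summable, ?_⟩
  rw [hsum.tsum_eq, ← hM, ← hN]
  nlinarith [real_inner_le_norm M N, sq_nonneg (‖M‖ - ‖N‖)]

end HilbertSchmidt

def joinAt (m : ℕ) {k : ℕ} (u v : ℕ → ℕ) : Fin k → ℕ :=
  fun i => if i.val < m then u i.val else v (i.val - m)

theorem joinAt_congr {m k : ℕ} {u u' v v' : ℕ → ℕ} (hu : ∀ i < m, u i = u' i)
    (hv : ∀ i < k - m, v i = v' i) : (joinAt m u v : Fin k → ℕ) = joinAt m u' v' := by
  funext i
  unfold joinAt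
  split_ifs with h
  · exact hu _ h
  · exact hv _ (by omega)

theorem contr_apply (p q r : ℕ) (f : (Fin p → ℕ) → ℝ) (g : (Fin q → ℕ) → ℝ)
    (x : Fin (p + q - 2 * r) → ℕ) :
    contr p q r f g x = ∑' s : Fin r → ℕ,
      f (joinAt (p - r) (pad x) (pad s))
        * g (joinAt (q - r) (fun i => pad x (p - r + i)) (pad s)) :=
  rfl

def appendEquiv (m n k : ℕ) (hk : k = m + n) : (Fin m → ℕ) × (Fin n → ℕ) ≃ (Fin k → ℕ) where
  toFun ab := joinAt m (pad ab.1) (pad ab.2)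
  invFun x := (fun j => x ⟨j, by omega⟩, fun j => x ⟨m + j, by omega⟩)
  left_inv ab := by ext j <;> simp [joinAt, pad]
  right_inv x := by
    funext i
    simp only [joinAt, pad]
    split_ifs <;> first | rfl | omega | (congr 1; ext; simp; omega)

theorem appendEquiv_apply {m n k : ℕ} (hk : k = m + n) (ab : (Fin m → ℕ) × (Fin n → ℕ)) :
    appendEquiv m n k hk ab = joinAt m (pad ab.1) (pad ab.2) := rfl

theorem summable_sq_joinAt {m n k : ℕ} (hk : k = m + n) {f : (Fin k → ℕ) → ℝ}
    (hf : Summable fun x => f x ^ 2) :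
    Summable fun ab : (Fin m → ℕ) × (Fin n → ℕ) => f (joinAt m (pad ab.1) (pad ab.2)) ^ 2 := by
  simpa only [Function.comp_def, appendEquiv_apply] using (appendEquiv m n k hk).summable_iff.mpr hf

theorem pad_appendEquiv_of_lt {m n k : ℕ} (hk : k = m + n) (a : Fin m → ℕ) (b : Fin n → ℕ)
    {j : ℕ} (hj : j < m) : pad (appendEquiv m n k hk (a, b)) j = pad a j := by
  simp [appendEquiv, joinAt, pad, hj, show j < k by omega]

theorem pad_appendEquiv_add {m n k : ℕ} (hk : k = m + n) (a : Fin m → ℕ) (b : Fin n → ℕ)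
    (j : ℕ) : pad (appendEquiv m n k hk (a, b)) (m + j) = pad b j := by
  by_cases hj : j < n <;> simp [appendEquiv, joinAt, pad, hj, show m + j < k ↔ j < n by omega]

theorem contr_appendEquiv {p q r m n : ℕ} (hm : p - r = m) (hn : q - r = n)
    (hk : p + q - 2 * r = m + n) (f : (Fin p → ℕ) → ℝ) (g : (Fin q → ℕ) → ℝ)
    (ab : (Fin m → ℕ) × (Fin n → ℕ)) :
    contr p q r f g (appendEquiv m n _ hk ab)
      = ∑' s : Fin r → ℕ, f (joinAt m (pad ab.1) (pad s)) * g (joinAt n (pad ab.2) (pad s)) := by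
  subst hm hn
  obtain ⟨a, b⟩ := ab
  rw [contr_apply]
  refine tsum_congr fun s => ?_
  rw [joinAt_congr (fun i hi => pad_appendEquiv_of_lt hk a b hi) fun _ _ => rfl,
    joinAt_congr (fun i _ => pad_appendEquiv_add hk a b i) fun _ _ => rfl]

def blockSwap {p : ℕ} (r : ℕ) (hr : r ≤ p) : Equiv.Perm (Fin p) where
  toFun i := ⟨if i < p - r then r + i else i - (p - r), by split_ifs <;> omega⟩
  invFun i := ⟨if i < r then i + (p - r) else i - r, by split_ifs <;> omega⟩
  left_inv i := Fin.ext (by dsimp only; split_ifs <;> omega)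
  right_inv i := Fin.ext (by dsimp only; split_ifs <;> omega)

theorem IsSym.apply_joinAt_comm {p r : ℕ} (hr : r ≤ p) {f : (Fin p → ℕ) → ℝ} (hf : IsSym f)
    (u v : ℕ → ℕ) : f (joinAt r u v) = f (joinAt (p - r) v u) := by
  rw [← hf (blockSwap r hr)]
  congr 1
  funext i
  simp only [Function.comp_apply, joinAt, blockSwap, Equiv.coe_fn_mk]
  split_ifs <;> first | rfl | omega | (congr 1; omega)

theorem IsSym.contr_sub_appendEquiv {p r : ℕ} (hr : r ≤ p) {f : (Fin p → ℕ) → ℝ} (hf : IsSym f)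
    (hk : p + p - 2 * (p - r) = r + r) (st : (Fin r → ℕ) × (Fin r → ℕ)) :
    contr p p (p - r) f f (appendEquiv r r _ hk st) = ∑' a : Fin (p - r) → ℕ,
      f (joinAt (p - r) (pad a) (pad st.1)) * f (joinAt (p - r) (pad a) (pad st.2)) := by
  rw [contr_appendEquiv (Nat.sub_sub_self hr) (Nat.sub_sub_self hr)]
  exact tsum_congr fun a => by
    rw [hf.apply_joinAt_comm hr (pad st.1), hf.apply_joinAt_comm hr (pad st.2)]

theorem nsq_eq_tsum_equiv {β : Type*} {k : ℕ} (e : β ≃ (Fin k → ℕ)) (h : (Fin k → ℕ) → ℝ) :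
    nsq h = ∑' b, h (e b) ^ 2 :=
  (e.tsum_eq fun x => h x ^ 2).symm

theorem nsq_contr_le {p r : ℕ} (hr : r ≤ p) {f g : (Fin p → ℕ) → ℝ} (hf : IsSym f) (hg : IsSym g)
    (hfs : Summable fun x => f x ^ 2) (hgs : Summable fun x => g x ^ 2) :
    Summable (fun x => contr p p r f g x ^ 2) ∧
      nsq (contr p p r f g) ≤ (nsq (contr p p (p - r) f f) + nsq (contr p p (p - r) g g)) / 2 := by
  have hp : p = (p - r) + r := by omega
  have hk₁ : p + p - 2 * r = (p - r) + (p - r) := by omega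
  have hk₂ : p + p - 2 * (p - r) = r + r := by omega
  let F (a : Fin (p - r) → ℕ) (s : Fin r → ℕ) : ℝ := f (joinAt (p - r) (pad a) (pad s))
  let G (b : Fin (p - r) → ℕ) (s : Fin r → ℕ) : ℝ := g (joinAt (p - r) (pad b) (pad s))
  obtain ⟨hsum, hle⟩ := summable_sq_tsum_mul_and_le F G (summable_sq_joinAt hp hfs)
    (summable_sq_joinAt hp hgs)
  have hfg (ab) : contr p p r f g (appendEquiv _ _ _ hk₁ ab) ^ 2
      = (∑' s, F ab.1 s * G ab.2 s) ^ 2 := by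
    rw [contr_appendEquiv rfl rfl]
  refine ⟨(appendEquiv _ _ _ hk₁).summable_iff.mp (hsum.congr fun ab => (hfg ab).symm), ?_⟩
  rw [nsq_eq_tsum_equiv (appendEquiv _ _ _ hk₁), tsum_congr hfg,
    nsq_eq_tsum_equiv (appendEquiv _ _ _ hk₂), nsq_eq_tsum_equiv (appendEquiv _ _ _ hk₂)]
  simpa only [hf.contr_sub_appendEquiv hr, hg.contr_sub_appendEquiv hr] using hle

theorem sq_symz_le {k : ℕ} (h : (Fin k → ℕ) → ℝ) (x : Fin k → ℕ) :
    symz h x ^ 2 ≤ (k.factorial : ℝ)⁻¹ * ∑ σ : Equiv.Perm (Fin k), h (x ∘ σ) ^ 2 := by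
  have hcs := sq_sum_le_card_mul_sum_sq (s := .univ) (f := fun σ : Equiv.Perm (Fin k) => h (x ∘ σ))
  rw [Finset.card_univ, Fintype.card_perm, Fintype.card_fin] at hcs
  calc symz h x ^ 2 = (1 / (k.factorial : ℝ)) ^ 2 * (∑ σ : Equiv.Perm (Fin k), h (x ∘ σ)) ^ 2 :=
        mul_pow _ _ _
    _ ≤ (1 / (k.factorial : ℝ)) ^ 2 * (k.factorial * ∑ σ : Equiv.Perm (Fin k), h (x ∘ σ) ^ 2) := by
        gcongr
    _ = _ := by field_simp

theorem nsq_symz_le {k : ℕ} {h : (Fin k → ℕ) → ℝ} (hs : Summable fun x => h x ^ 2) :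
    nsq (symz h) ≤ nsq h := by
  have hσ (σ : Equiv.Perm (Fin k)) : Summable fun x => h (x ∘ σ) ^ 2 :=
    hs.comp_injective (f := fun x => h x ^ 2) σ.surjective.injective_comp_right
  have hsum := (summable_sum (s := .univ) fun σ _ => hσ σ).mul_left (k.factorial : ℝ)⁻¹
  calc nsq (symz h)
      ≤ ∑' x, (k.factorial : ℝ)⁻¹ * ∑ σ : Equiv.Perm (Fin k), h (x ∘ σ) ^ 2 :=
        (hsum.of_nonneg_of_le (fun _ => sq_nonneg _) (sq_symz_le h)).tsum_le_tsum
          (sq_symz_le h) hsum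
    _ = (k.factorial : ℝ)⁻¹ * ∑ σ : Equiv.Perm (Fin k), nsq h := by
        rw [tsum_mul_left, Summable.tsum_finsetSum fun σ _ => hσ σ]
        congr 1
        exact Finset.sum_congr rfl fun σ _ =>
          (Equiv.arrowCongr σ.symm (Equiv.refl ℕ)).tsum_eq fun x => h x ^ 2
    _ = nsq h := by
        rw [Finset.sum_const, Finset.card_univ, Fintype.card_perm, Fintype.card_fin, nsmul_eq_mul,
          inv_mul_cancel_left₀ (by positivity)]

theorem coeff_mul_weight_eq {p r : ℕ} (hr : 0 < r) (hrp : r ≤ p) :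
    ((r - 1).factorial : ℝ) ^ 2 * ((p - 1).choose (r - 1) : ℝ) ^ 4 * ((2 * p - 2 * r).factorial : ℝ)
        * ((r.factorial : ℝ) ^ 2 * ((p - r).factorial : ℝ) ^ 2 / (p.factorial : ℝ) ^ 4)
      = ((2 * (p - r)).choose (p - r) : ℝ) * ((r : ℝ) / p ^ 2) ^ 2 := by
  obtain ⟨a, rfl⟩ : ∃ a, r = a + 1 := ⟨r - 1, by omega⟩
  obtain ⟨b, rfl⟩ : ∃ b, p = b + a + 1 := ⟨p - (a + 1), by omega⟩
  have hchoose : ((b + a).choose a : ℝ) ≠ 0 := by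
    exact_mod_cast (Nat.choose_pos (by omega)).ne'
  rw [show a + 1 - 1 = a by omega, show b + a + 1 - 1 = b + a by omega,
    show 2 * (b + a + 1) - 2 * (a + 1) = b + b by omega, show b + a + 1 - (a + 1) = b by omega,
    show 2 * b = b + b by omega, Nat.factorial_succ, Nat.factorial_succ,
    ← Nat.add_choose_mul_factorial_mul_factorial b a,
    ← Nat.add_choose_mul_factorial_mul_factorial b b]
  push_cast
  field_simp

theorem coeff_mul_weight_le {p r : ℕ} (hr : 0 < r) (hrp : r ≤ p) :
    ((r - 1).factorial : ℝ) ^ 2 * ((p - 1).choose (r - 1) : ℝ) ^ 4 * ((2 * p - 2 * r).factorial : ℝ)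
        * ((r.factorial : ℝ) ^ 2 * ((p - r).factorial : ℝ) ^ 2 / (p.factorial : ℝ) ^ 4)
      ≤ ((2 * (p - r)).choose (p - r) : ℝ) := by
  rw [coeff_mul_weight_eq hr hrp]
  have hp : (1 : ℝ) ≤ p := by exact_mod_cast hr.trans_le hrp
  have hrp' : (r : ℝ) ≤ p := by exact_mod_cast hrp
  have hratio : (r : ℝ) / p ^ 2 ≤ 1 := (div_le_one (by positivity)).mpr (by nlinarith)
  exact mul_le_of_le_one_right (by positivity) (pow_le_one₀ (by positivity) hratio)

theorem weight_mul_nsq_symz_contr_le {p r : ℕ} (hr : 0 < r) (hrp : r ≤ p)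
    {f g : (Fin p → ℕ) → ℝ} (hf : IsSym f) (hg : IsSym g)
    (hfs : Summable fun x => f x ^ 2) (hgs : Summable fun x => g x ^ 2) {A B : ℝ}
    (hAB : 0 ≤ A + B)
    (hfc : nsq (contr p p (p - r) f f)
      ≤ ((r.factorial : ℝ)^2 * ((p - r).factorial : ℝ)^2 / (p.factorial : ℝ)^4) * A)
    (hgc : nsq (contr p p (p - r) g g)
      ≤ ((r.factorial : ℝ)^2 * ((p - r).factorial : ℝ)^2 / (p.factorial : ℝ)^4) * B) :
    ((r - 1).factorial : ℝ) ^ 2 * ((p - 1).choose (r - 1) : ℝ) ^ 4 * ((2 * p - 2 * r).factorial : ℝ)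
        * nsq (symz (contr p p r f g))
      ≤ ((2 * (p - r)).choose (p - r) : ℝ) * ((A + B) / 2) := by
  obtain ⟨hsum, hle⟩ := nsq_contr_le hrp hf hg hfs hgs
  have hsymz : nsq (symz (contr p p r f g))
      ≤ ((r.factorial : ℝ)^2 * ((p - r).factorial : ℝ)^2 / (p.factorial : ℝ)^4)
        * ((A + B) / 2) := by
    linarith [nsq_symz_le hsum]
  calc _ ≤ ((r - 1).factorial : ℝ) ^ 2 * ((p - 1).choose (r - 1) : ℝ) ^ 4
          * ((2 * p - 2 * r).factorial : ℝ)
          * (((r.factorial : ℝ)^2 * ((p - r).factorial : ℝ)^2 / (p.factorial : ℝ)^4)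
            * ((A + B) / 2)) := by gcongr
    _ ≤ ((2 * (p - r)).choose (p - r) : ℝ) * ((A + B) / 2) := by
      rw [← mul_assoc]
      gcongr
      exact coeff_mul_weight_le hr hrp

theorem sum_Ioo_choose_reflect (p : ℕ) :
    ∑ r ∈ Finset.Ioo 0 p, ((2 * (p - r)).choose (p - r) : ℝ)
      = ∑ r ∈ Finset.Ioo 0 p, ((2 * r).choose r : ℝ) :=
  Finset.sum_nbij' (p - ·) (p - ·) (by simp; omega) (by simp; omega) (by simp; omega)
    (by simp; omega) fun _ _ => rfl

theorem stmt_15_general (p : ℕ) (f g : (Fin p → ℕ) → ℝ)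
    (hf : IsSym f) (hg : IsSym g)
    (hfs : Summable fun x => f x ^ 2) (hgs : Summable fun x => g x ^ 2)
    (A B : ℝ) (hA : 0 ≤ A) (hB : 0 ≤ B)
    (hfc : ∀ r' ∈ Finset.Ioo 0 p,
      nsq (contr p p (p - r') f f)
        ≤ ((r'.factorial : ℝ)^2 * ((p - r').factorial : ℝ)^2 / (p.factorial : ℝ)^4) * A)
    (hgc : ∀ r' ∈ Finset.Ioo 0 p,
      nsq (contr p p (p - r') g g)
        ≤ ((r'.factorial : ℝ)^2 * ((p - r').factorial : ℝ)^2 / (p.factorial : ℝ)^4) * B) :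
    ∑ r ∈ Finset.Ioo 0 p,
        ((r-1).factorial : ℝ)^2 * (Nat.choose (p-1) (r-1) : ℝ)^4 * ((2*p - 2*r).factorial : ℝ)
          * nsq (symz (contr p p r f g))
      ≤ (1 / (p : ℝ)^2) * ((A + B) / 2)
          * (∑ r ∈ Finset.Ioo 0 p, (Nat.choose (2*r) r : ℝ)) * (p : ℝ)^2 := by
  have hterm (r : ℕ) (hr : r ∈ Finset.Ioo 0 p) :=
    weight_mul_nsq_symz_contr_le (Finset.mem_Ioo.mp hr).1 (Finset.mem_Ioo.mp hr).2.le
      hf hg hfs hgs (add_nonneg hA hB) (hfc r hr) (hgc r hr)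
  calc _ ≤ ∑ r ∈ Finset.Ioo 0 p, ((2 * (p - r)).choose (p - r) : ℝ) * ((A + B) / 2) :=
        Finset.sum_le_sum hterm
    _ = (∑ r ∈ Finset.Ioo 0 p, (Nat.choose (2*r) r : ℝ)) * ((A + B) / 2) := by
        rw [← Finset.sum_mul, sum_Ioo_choose_reflect]
    _ = _ := by
        rcases eq_or_ne p 0 with rfl | hp
        · simp
        · field_simp

theorem stmt_15 (p : ℕ) (hp : 1 ≤ p) (f g : (Fin p → ℕ) → ℝ)
    (hf : IsSym f) (hg : IsSym g)
    (hfs : Summable fun x => f x ^ 2) (hgs : Summable fun x => g x ^ 2)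
    (A B : ℝ) (hA : 0 ≤ A) (hB : 0 ≤ B)
    (hfc : ∀ r' ∈ Finset.Ioo 0 p,
      nsq (contr p p (p - r') f f)
        ≤ ((r'.factorial : ℝ)^2 * ((p - r').factorial : ℝ)^2 / (p.factorial : ℝ)^4) * A)
    (hgc : ∀ r' ∈ Finset.Ioo 0 p,
      nsq (contr p p (p - r') g g)
        ≤ ((r'.factorial : ℝ)^2 * ((p - r').factorial : ℝ)^2 / (p.factorial : ℝ)^4) * B) :
    ∑ r ∈ Finset.Ioo 0 p,
        ((r-1).factorial : ℝ)^2 * (Nat.choose (p-1) (r-1) : ℝ)^4 * ((2*p - 2*r).factorial : ℝ)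
          * nsq (symz (contr p p r f g))
      ≤ (1 / (p : ℝ)^2) * ((A + B) / 2)
          * (∑ r ∈ Finset.Ioo 0 p, (Nat.choose (2*r) r : ℝ)) * (p : ℝ)^2 :=
  stmt_15_general p f g hf hg hfs hgs A B hA hB hfc hgc
end
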